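/- Let 0 < θ < 1. There exists a constant C_θ > 0 such that for every u ∈ 𝒮(ℝⁿ): (∑_{j≥0} ‖ψ_j(D)u‖_{L^p(ℝⁿ)}^p)^{1/p} ≤ C_θ (∑_{j≥0} 2^{jθp} ∑_{k≥0} ‖φ_j(D_t) φ̃_k(D_x) u‖_{L^p(ℝⁿ)}^p)^{1/p}, where φ_j(D_t) acts as a Fourier multiplier in the first variable t and φ̃_k(D_x) in the remaining n−1 variables x. (In Besov-space language: ‖u‖_{B^0_p(ℝⁿ)} ≤ C_θ ‖u‖_{B^θ_p(ℝ, B^0_p(ℝ^{n−1}))}.) -/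

import Mathlib

/-!
Since `ψ_j = ∑_{i ≤ j} φ_j ⊗ φ̃_i + ∑_{i < j} φ_i ⊗ φ̃_j`, the block `ψ_j(D)u` is bounded in `Lᵖ`
by a row `∑_{i ≤ j} ‖φ_j(D_t)φ̃_i(D_x)u‖` plus a column `∑_{i < j} ‖φ_i(D_t)φ̃_j(D_x)u‖`.
The row has `j + 1` terms, so by the power mean inequality its `p`-th power costs a factor
`(j + 1)^(p - 1)`, which is absorbed by the weight `2^(jθp)`. In the column, the `i`-th term is at
most `2^(-iθ)` times the weighted `ℓᵖ` norm of the column, and `∑ 2^(-iθ) < ∞` since `θ > 0`;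
summing over `j` and exchanging the order of summation returns the weighted norm of the rows.
-/

open MeasureTheory Real Complex Filter Topology ENNReal

noncomputable section

abbrev En (k : ℕ) := EuclideanSpace ℝ (Fin k)

/-- Dyadic partition on ℝ. -/
def dyadic1 (φ0 : ℝ → ℝ) : ℕ → ℝ → ℝ
  | 0 => φ0
  | (j + 1) => fun ξ => φ0 (((2 : ℝ) ^ (-(j + 1 : ℤ))) * ξ) - φ0 (((2 : ℝ) ^ (-(j : ℤ))) * ξ)

/-- Dyadic partition on ℝ^k. -/
def dyadicK (k : ℕ) (ψ0 : En k → ℝ) : ℕ → En k → ℝ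
  | 0 => ψ0
  | (j + 1) => fun ξ => ψ0 (((2 : ℝ) ^ (-(j + 1 : ℤ))) • ξ) - ψ0 (((2 : ℝ) ^ (-(j : ℤ))) • ξ)

/-- The mixed dyadic partition `ψ_j` on `ℝ × ℝ^k`. -/
def mixed (k : ℕ) (φ0 : ℝ → ℝ) (ψ0 : En k → ℝ) : ℕ → ℝ × En k → ℝ
  | 0 => fun q => φ0 q.1 * ψ0 q.2
  | (j + 1) => fun q =>
      dyadic1 φ0 (j + 1) q.1 * (∑ i ∈ Finset.range (j + 2), dyadicK k ψ0 i q.2) +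
      (∑ i ∈ Finset.range (j + 1), dyadic1 φ0 i q.1) * dyadicK k ψ0 (j + 1) q.2

/-- Inverse Fourier transform on the product `ℝ × ℝ^k`. -/
def invFTprod (k : ℕ) (χ : ℝ × En k → ℝ) (w : ℝ × En k) : ℂ :=
  ((2 * Real.pi) ^ (-(k + 1 : ℝ)) : ℝ) •
    ∫ q : ℝ × En k,
      Complex.exp (Complex.I * ((w.1 * q.1 + (inner ℝ w.2 q.2 : ℝ) : ℝ) : ℂ)) * (χ q : ℂ)

/-- Inverse Fourier transform on ℝ. -/
def invFT1 (φ : ℝ → ℝ) (t : ℝ) : ℂ :=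
  ((2 * Real.pi)⁻¹ : ℝ) • ∫ ξ : ℝ, Complex.exp (Complex.I * ((t * ξ : ℝ) : ℂ)) * (φ ξ : ℂ)

/-- Inverse Fourier transform on `ℝ^k`. -/
def invFTK (k : ℕ) (φ : En k → ℝ) (w : En k) : ℂ :=
  ((2 * Real.pi) ^ (-(k : ℝ)) : ℝ) •
    ∫ ξ : En k, Complex.exp (Complex.I * ((inner ℝ w ξ : ℝ) : ℂ)) * (φ ξ : ℂ)

/-- The dyadic block `ψ_j(D)w` on the product space. -/
def blockProd (k : ℕ) (φ0 : ℝ → ℝ) (ψ0 : En k → ℝ) (j : ℕ) (w : ℝ × En k → ℂ)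
    (x : ℝ × En k) : ℂ :=
  ∫ z : ℝ × En k, invFTprod k (mixed k φ0 ψ0 j) (x - z) * w z

/-- The Besov norm `B⁰_p(ℝⁿ)` with respect to the mixed partition. -/
def besovProd (k : ℕ) (φ0 : ℝ → ℝ) (ψ0 : En k → ℝ) (p : ℝ) (w : ℝ × En k → ℂ) : ℝ≥0∞ :=
  (∑' j : ℕ, eLpNorm (blockProd k φ0 ψ0 j w) (ENNReal.ofReal p) volume ^ p) ^ (1 / p)

/-- The mixed block `φ_j(D_t) φ̃_i(D_x) u`. -/
def blockJK (k : ℕ) (φ0 : ℝ → ℝ) (ψ0 : En k → ℝ) (j i : ℕ) (u : ℝ × En k → ℂ)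
    (x : ℝ × En k) : ℂ :=
  ∫ z : ℝ × En k, invFT1 (dyadic1 φ0 j) (x.1 - z.1) * invFTK k (dyadicK k ψ0 i) (x.2 - z.2) * u z

section PhaseIntegral

variable {α : Type*} [MeasurableSpace α] {μ : Measure α}

lemma norm_integral_exp_mul_ofReal_le (r φ : α → ℝ) :
    ‖∫ ξ, Complex.exp (Complex.I * (r ξ : ℂ)) * (φ ξ : ℂ) ∂μ‖ ≤ ∫ ξ, ‖φ ξ‖ ∂μ :=
  (norm_integral_le_integral_norm _).trans_eq <| by
    simp only [norm_mul, Complex.norm_exp_I_mul_ofReal, one_mul, Complex.norm_real]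

lemma integrable_exp_mul_ofReal {r : α → ℝ} (hr : Measurable r) {φ : α → ℝ}
    (hφ : Integrable φ μ) :
    Integrable (fun ξ => Complex.exp (Complex.I * (r ξ : ℂ)) * (φ ξ : ℂ)) μ :=
  hφ.ofReal.bdd_mul (by fun_prop) (.of_forall fun ξ => (Complex.norm_exp_I_mul_ofReal _).le)

lemma integral_exp_mul_ofReal_add {r : α → ℝ} (hr : Measurable r) {φ ψ : α → ℝ}
    (hφ : Integrable φ μ) (hψ : Integrable ψ μ) :
    ∫ ξ, Complex.exp (Complex.I * (r ξ : ℂ)) * ((φ ξ + ψ ξ : ℝ) : ℂ) ∂μ =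
      (∫ ξ, Complex.exp (Complex.I * (r ξ : ℂ)) * (φ ξ : ℂ) ∂μ) +
        ∫ ξ, Complex.exp (Complex.I * (r ξ : ℂ)) * (ψ ξ : ℂ) ∂μ := by
  simp only [Complex.ofReal_add, mul_add]
  exact integral_add (integrable_exp_mul_ofReal hr hφ) (integrable_exp_mul_ofReal hr hψ)

lemma integral_exp_mul_ofReal_sum {ι : Type*} (s : Finset ι) {r : α → ℝ} (hr : Measurable r)
    {φ : ι → α → ℝ} (hφ : ∀ i ∈ s, Integrable (φ i) μ) :
    ∫ ξ, Complex.exp (Complex.I * (r ξ : ℂ)) * ((∑ i ∈ s, φ i ξ : ℝ) : ℂ) ∂μ =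
      ∑ i ∈ s, ∫ ξ, Complex.exp (Complex.I * (r ξ : ℂ)) * (φ i ξ : ℂ) ∂μ := by
  simp only [Complex.ofReal_sum, Finset.mul_sum]
  exact integral_finsetSum s fun i hi => integrable_exp_mul_ofReal hr (hφ i hi)

lemma measurable_integral_exp_mul_ofReal [SFinite μ] {X : Type*} [MeasurableSpace X]
    {r : X → α → ℝ} (hr : Measurable (Function.uncurry r)) {φ : α → ℝ} (hφ : Measurable φ) :
    Measurable fun x => ∫ ξ, Complex.exp (Complex.I * (r x ξ : ℂ)) * (φ ξ : ℂ) ∂μ := by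
  have h : Measurable fun q : X × α => Complex.exp (Complex.I * (r q.1 q.2 : ℂ)) * (φ q.2 : ℂ) := by
    fun_prop
  exact h.stronglyMeasurable.integral_prod_right'.measurable

end PhaseIntegral

section InverseFourier

variable {k : ℕ}

lemma norm_invFT1_le (φ : ℝ → ℝ) (t : ℝ) : ‖invFT1 φ t‖ ≤ (2 * π)⁻¹ * ∫ ξ, ‖φ ξ‖ := by
  rw [invFT1, norm_smul, Real.norm_of_nonneg (by positivity)]
  gcongr
  exact norm_integral_exp_mul_ofReal_le (fun ξ => t * ξ) φ

lemma norm_invFTK_le (φ : En k → ℝ) (w : En k) :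
    ‖invFTK k φ w‖ ≤ (2 * π) ^ (-(k : ℝ)) * ∫ ξ, ‖φ ξ‖ := by
  rw [invFTK, norm_smul, Real.norm_of_nonneg (by positivity)]
  gcongr
  exact norm_integral_exp_mul_ofReal_le (fun ξ => inner ℝ w ξ) φ

lemma measurable_invFT1 {φ : ℝ → ℝ} (hφ : Measurable φ) : Measurable (invFT1 φ) :=
  (measurable_integral_exp_mul_ofReal (μ := volume) (r := fun t ξ => t * ξ) (by fun_prop)
    hφ).const_smul ((2 * π)⁻¹ : ℝ)

lemma measurable_invFTK {φ : En k → ℝ} (hφ : Measurable φ) : Measurable (invFTK k φ) :=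
  (measurable_integral_exp_mul_ofReal (μ := volume) (r := fun w ξ => inner ℝ w ξ) (by fun_prop)
    hφ).const_smul ((2 * π) ^ (-(k : ℝ)) : ℝ)

lemma invFTprod_mul (χ₁ : ℝ → ℝ) (χ₂ : En k → ℝ) (w : ℝ × En k) :
    invFTprod k (fun q => χ₁ q.1 * χ₂ q.2) w = invFT1 χ₁ w.1 * invFTK k χ₂ w.2 := by
  have hfactor : ∫ q : ℝ × En k, Complex.exp (Complex.I * ((w.1 * q.1 + inner ℝ w.2 q.2 : ℝ) : ℂ)) *
        ((χ₁ q.1 * χ₂ q.2 : ℝ) : ℂ) =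
      (∫ t, Complex.exp (Complex.I * ((w.1 * t : ℝ) : ℂ)) * (χ₁ t : ℂ)) *
        ∫ x, Complex.exp (Complex.I * ((inner ℝ w.2 x : ℝ) : ℂ)) * (χ₂ x : ℂ) := by
    rw [Measure.volume_eq_prod, ← integral_prod_mul]
    congr 1 with q
    push_cast
    rw [mul_add, Complex.exp_add]
    ring
  have hconst : (2 * π) ^ (-(k + 1 : ℝ)) = (2 * π)⁻¹ * (2 * π) ^ (-(k : ℝ)) := by
    rw [neg_add', Real.rpow_sub_one (by positivity), div_eq_mul_inv, mul_comm]
  rw [invFTprod, invFT1, invFTK, hfactor, smul_mul_smul_comm, hconst]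

lemma invFTprod_add {χ₁ χ₂ : ℝ × En k → ℝ} (h₁ : Integrable χ₁) (h₂ : Integrable χ₂)
    (w : ℝ × En k) :
    invFTprod k (fun q => χ₁ q + χ₂ q) w = invFTprod k χ₁ w + invFTprod k χ₂ w := by
  rw [invFTprod, integral_exp_mul_ofReal_add (by fun_prop) h₁ h₂, smul_add]
  rfl

lemma invFTprod_sum {ι : Type*} (s : Finset ι) {χ : ι → ℝ × En k → ℝ}
    (hχ : ∀ i ∈ s, Integrable (χ i)) (w : ℝ × En k) :
    invFTprod k (fun q => ∑ i ∈ s, χ i q) w = ∑ i ∈ s, invFTprod k (χ i) w := by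
  rw [invFTprod, integral_exp_mul_ofReal_sum s (by fun_prop) hχ, Finset.smul_sum]
  rfl

end InverseFourier

section DyadicPartition

variable {k : ℕ} {φ0 : ℝ → ℝ} {ψ0 : En k → ℝ}

lemma measurable_dyadic1 (hφ : Measurable φ0) (j : ℕ) : Measurable (dyadic1 φ0 j) := by
  cases j <;> simp only [dyadic1] <;> fun_prop

lemma measurable_dyadicK (hψ : Measurable ψ0) (j : ℕ) : Measurable (dyadicK k ψ0 j) := by
  cases j <;> simp only [dyadicK] <;> fun_prop

lemma integrable_dyadic1 (hφ : Integrable φ0) (j : ℕ) : Integrable (dyadic1 φ0 j) := by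
  cases j with
  | zero => exact hφ
  | succ j => exact (hφ.comp_smul (by positivity)).sub (hφ.comp_smul (by positivity))

lemma integrable_dyadicK (hψ : Integrable ψ0) (j : ℕ) : Integrable (dyadicK k ψ0 j) := by
  cases j with
  | zero => exact hψ
  | succ j => exact (hψ.comp_smul (by positivity)).sub (hψ.comp_smul (by positivity))

lemma mixed_eq_sum (j : ℕ) (q : ℝ × En k) :
    mixed k φ0 ψ0 j q =
      (∑ i ∈ Finset.range (j + 1), dyadic1 φ0 j q.1 * dyadicK k ψ0 i q.2) +
        ∑ i ∈ Finset.range j, dyadic1 φ0 i q.1 * dyadicK k ψ0 j q.2 := by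
  cases j <;> simp [mixed, dyadic1, dyadicK, Finset.mul_sum, Finset.sum_mul]

lemma invFTprod_mixed (hφ : Integrable φ0) (hψ : Integrable ψ0) (j : ℕ) (w : ℝ × En k) :
    invFTprod k (mixed k φ0 ψ0 j) w =
      (∑ i ∈ Finset.range (j + 1), invFT1 (dyadic1 φ0 j) w.1 * invFTK k (dyadicK k ψ0 i) w.2) +
        ∑ i ∈ Finset.range j, invFT1 (dyadic1 φ0 i) w.1 * invFTK k (dyadicK k ψ0 j) w.2 := by
  have htensor (a b : ℕ) : Integrable fun q : ℝ × En k => dyadic1 φ0 a q.1 * dyadicK k ψ0 b q.2 :=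
    (integrable_dyadic1 hφ a).mul_prod (integrable_dyadicK hψ b)
  rw [show mixed k φ0 ψ0 j = _ from funext (mixed_eq_sum j),
    invFTprod_add (integrable_finsetSum _ fun i _ => htensor j i)
      (integrable_finsetSum _ fun i _ => htensor i j),
    invFTprod_sum _ (fun i _ => htensor j i), invFTprod_sum _ (fun i _ => htensor i j)]
  simp only [invFTprod_mul]

end DyadicPartition

section Blocks

variable {k : ℕ} {φ0 : ℝ → ℝ} {ψ0 : En k → ℝ}

lemma measurable_blockJK_kernel (hφ : Measurable φ0) (hψ : Measurable ψ0) (a b : ℕ) :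
    Measurable fun q : (ℝ × En k) × (ℝ × En k) =>
      invFT1 (dyadic1 φ0 a) (q.1.1 - q.2.1) * invFTK k (dyadicK k ψ0 b) (q.1.2 - q.2.2) :=
  have h₁ := measurable_invFT1 (measurable_dyadic1 hφ a)
  have h₂ := measurable_invFTK (k := k) (measurable_dyadicK hψ b)
  by fun_prop

lemma integrable_blockJK_integrand (hφ : Measurable φ0) (hψ : Measurable ψ0) (a b : ℕ)
    {u : ℝ × En k → ℂ} (hu : Integrable u) (x : ℝ × En k) :
    Integrable fun z : ℝ × En k =>
      invFT1 (dyadic1 φ0 a) (x.1 - z.1) * invFTK k (dyadicK k ψ0 b) (x.2 - z.2) * u z := by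
  refine hu.bdd_mul (c := ((2 * π)⁻¹ * ∫ ξ, ‖dyadic1 φ0 a ξ‖) *
      ((2 * π) ^ (-(k : ℝ)) * ∫ ξ, ‖dyadicK k ψ0 b ξ‖))
    ((measurable_blockJK_kernel hφ hψ a b).comp measurable_prodMk_left).aestronglyMeasurable
    (.of_forall fun z => ?_)
  rw [norm_mul]
  exact mul_le_mul (norm_invFT1_le _ _) (norm_invFTK_le _ _) (norm_nonneg _)
    (mul_nonneg (by positivity) (integral_nonneg fun ξ => norm_nonneg _))

lemma aestronglyMeasurable_blockJK (hφ : Measurable φ0) (hψ : Measurable ψ0) (a b : ℕ)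
    {u : ℝ × En k → ℂ} (hu : AEStronglyMeasurable u) :
    AEStronglyMeasurable (blockJK k φ0 ψ0 a b u) :=
  ((measurable_blockJK_kernel hφ hψ a b).aestronglyMeasurable.mul
    (hu.comp_snd (μ := volume))).integral_prod_right'

variable (hφm : Measurable φ0) (hφ : Integrable φ0) (hψm : Measurable ψ0) (hψ : Integrable ψ0)
include hφm hφ hψm hψ

lemma blockProd_eq_sum {u : ℝ × En k → ℂ} (hu : Integrable u) (j : ℕ) :
    blockProd k φ0 ψ0 j u =
      (∑ i ∈ Finset.range (j + 1), blockJK k φ0 ψ0 j i u) +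
        ∑ i ∈ Finset.range j, blockJK k φ0 ψ0 i j u := by
  ext x
  have hint (a b : ℕ) := integrable_blockJK_integrand hφm hψm a b hu x
  simp only [blockProd, blockJK, Pi.add_apply, Finset.sum_apply]
  rw [← integral_finsetSum _ fun i _ => hint j i, ← integral_finsetSum _ fun i _ => hint i j,
    ← integral_add (integrable_finsetSum _ fun i _ => hint j i)
      (integrable_finsetSum _ fun i _ => hint i j)]
  congr 1 with z
  simp only [invFTprod_mixed hφ hψ, Prod.fst_sub, Prod.snd_sub, add_mul, Finset.sum_mul]

lemma eLpNorm_blockProd_le {p : ℝ≥0∞} (hp : 1 ≤ p) {u : ℝ × En k → ℂ} (hu : Integrable u)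
    (j : ℕ) :
    eLpNorm (blockProd k φ0 ψ0 j u) p volume ≤
      (∑ i ∈ Finset.range (j + 1), eLpNorm (blockJK k φ0 ψ0 j i u) p volume) +
        ∑ i ∈ Finset.range j, eLpNorm (blockJK k φ0 ψ0 i j u) p volume := by
  have hmeas (a b : ℕ) := aestronglyMeasurable_blockJK hφm hψm a b hu.aestronglyMeasurable
  rw [blockProd_eq_sum hφm hφ hψm hψ hu]
  refine (eLpNorm_add_le ?_ ?_ hp).trans (add_le_add (eLpNorm_sum_le (fun i _ => hmeas j i) hp)
    (eLpNorm_sum_le (fun i _ => hmeas i j) hp))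
  · exact Finset.aestronglyMeasurable_sum _ fun i _ => hmeas j i
  · exact Finset.aestronglyMeasurable_sum _ fun i _ => hmeas i j

end Blocks

section WeightedSequences

lemma exists_natCast_add_one_rpow_le_mul_pow (e : ℝ) {b : ℝ} (hb : 1 < b) :
    ∃ C : ℝ, ∀ j : ℕ, ((j : ℝ) + 1) ^ e ≤ C * b ^ j := by
  obtain ⟨C, hC⟩ := ((tendsto_pow_const_div_const_pow_of_one_lt ⌈e⌉₊ hb).comp
    (tendsto_add_atTop_nat 1)).bddAbove_range
  refine ⟨C * b, fun j => ?_⟩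
  have hj : (1 : ℝ) ≤ j + 1 := by linarith [j.cast_nonneg (α := ℝ)]
  calc ((j : ℝ) + 1) ^ e ≤ ((j : ℝ) + 1) ^ (⌈e⌉₊ : ℝ) :=
        Real.rpow_le_rpow_of_exponent_le hj (Nat.le_ceil e)
    _ ≤ C * b ^ (j + 1) := by
      rw [Real.rpow_natCast, ← div_le_iff₀ (by positivity)]
      exact_mod_cast hC ⟨j, rfl⟩
    _ = C * b * b ^ j := by ring

lemma ENNReal.exists_natCast_add_one_rpow_le_mul_pow (e : ℝ) {b : ℝ≥0∞} (hb : 1 < b)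
    (hb' : b ≠ ∞) : ∃ C : ℝ≥0∞, C ≠ ∞ ∧ ∀ j : ℕ, ((j + 1 : ℕ) : ℝ≥0∞) ^ e ≤ C * b ^ j := by
  obtain ⟨C, hC⟩ := _root_.exists_natCast_add_one_rpow_le_mul_pow e
    (b := b.toReal) (by simpa using ENNReal.toReal_strict_mono hb' hb)
  refine ⟨ENNReal.ofReal C, ENNReal.ofReal_ne_top, fun j => ?_⟩
  have hC0 : 0 ≤ C := zero_le_one.trans (by simpa using hC 0)
  rw [← ENNReal.ofReal_toReal hb', ← ENNReal.ofReal_pow ENNReal.toReal_nonneg,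
    ← ENNReal.ofReal_mul hC0, ← ENNReal.ofReal_natCast, ENNReal.ofReal_rpow_of_pos (by positivity)]
  exact ENNReal.ofReal_le_ofReal (by exact_mod_cast hC j)

variable {p : ℝ} {a : ℝ≥0∞}

lemma rpow_sum_range_le_mul_pow (hp : 1 ≤ p) (ha : 1 < a) (ha' : a ≠ ∞) :
    ∃ C : ℝ≥0∞, C ≠ ∞ ∧ ∀ (j : ℕ) (z : ℕ → ℝ≥0∞),
      (∑ i ∈ Finset.range (j + 1), z i) ^ p ≤ C * ((a ^ j) ^ p * ∑' i, z i ^ p) := by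
  have hap : 1 < a ^ p := ENNReal.one_lt_rpow ha (by linarith)
  obtain ⟨C, hC, hCj⟩ := ENNReal.exists_natCast_add_one_rpow_le_mul_pow (p - 1) hap
    (ENNReal.rpow_ne_top_of_nonneg (by linarith) ha')
  refine ⟨C, hC, fun j z => ?_⟩
  calc (∑ i ∈ Finset.range (j + 1), z i) ^ p
      ≤ ((j + 1 : ℕ) : ℝ≥0∞) ^ (p - 1) * ∑ i ∈ Finset.range (j + 1), z i ^ p := by
        simpa using ENNReal.rpow_sum_le_const_mul_sum_rpow (Finset.range (j + 1)) z hp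
    _ ≤ C * (a ^ p) ^ j * ∑' i, z i ^ p := by gcongr; exacts [hCj j, ENNReal.sum_le_tsum _]
    _ = C * ((a ^ j) ^ p * ∑' i, z i ^ p) := by
        rw [mul_assoc, ← ENNReal.rpow_natCast, ← ENNReal.rpow_natCast, ← ENNReal.rpow_mul,
          ← ENNReal.rpow_mul, mul_comm p]

lemma tsum_rpow_le_mul_tsum_pow_mul (hp : 0 < p) (ha : 1 < a) (ha' : a ≠ ∞) (z : ℕ → ℝ≥0∞) :
    (∑' i, z i) ^ p ≤ ((1 - a⁻¹)⁻¹) ^ p * ∑' i, (a ^ i) ^ p * z i ^ p := by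
  set M := (∑' i, (a ^ i) ^ p * z i ^ p) ^ p⁻¹
  have hM : M ^ p = ∑' i, (a ^ i) ^ p * z i ^ p := by
    rw [← ENNReal.rpow_mul, inv_mul_cancel₀ hp.ne', ENNReal.rpow_one]
  have hterm (i : ℕ) : z i ≤ a⁻¹ ^ i * M := by
    have hweighted : a ^ i * z i ≤ M := by
      rw [← ENNReal.rpow_le_rpow_iff hp, hM, ENNReal.mul_rpow_of_nonneg _ _ hp.le]
      exact ENNReal.le_tsum (f := fun i => (a ^ i) ^ p * z i ^ p) i
    calc z i = a⁻¹ ^ i * (a ^ i * z i) := by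
          rw [← mul_assoc, ← ENNReal.inv_pow,
            ENNReal.inv_mul_cancel (pow_ne_zero _ (zero_lt_one.trans ha).ne') (pow_ne_top ha'),
            one_mul]
      _ ≤ a⁻¹ ^ i * M := by gcongr
  calc (∑' i, z i) ^ p ≤ ((1 - a⁻¹)⁻¹ * M) ^ p := by
        gcongr
        rw [← ENNReal.tsum_geometric, ← ENNReal.tsum_mul_right]
        exact ENNReal.tsum_le_tsum hterm
    _ = ((1 - a⁻¹)⁻¹) ^ p * ∑' i, (a ^ i) ^ p * z i ^ p := by
        rw [ENNReal.mul_rpow_of_nonneg _ _ hp.le, hM]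

lemma tsum_rpow_le_of_le_row_add_column (hp : 1 ≤ p) (ha : 1 < a) (ha' : a ≠ ∞) :
    ∃ C : ℝ≥0∞, C ≠ ∞ ∧ ∀ (n : ℕ → ℕ → ℝ≥0∞) (b : ℕ → ℝ≥0∞),
      (∀ j, b j ≤ (∑ i ∈ Finset.range (j + 1), n j i) + ∑ i ∈ Finset.range j, n i j) →
        ∑' j, b j ^ p ≤ C * ∑' j, (a ^ j) ^ p * ∑' i, n j i ^ p := by
  have hp0 : 0 < p := zero_lt_one.trans_le hp
  obtain ⟨Cr, hCr, hrow⟩ := rpow_sum_range_le_mul_pow hp ha ha'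
  set Cc := ((1 - a⁻¹)⁻¹) ^ p
  have hCc : Cc ≠ ∞ := ENNReal.rpow_ne_top_of_nonneg hp0.le <| ENNReal.inv_ne_top.2 <|
    (tsub_pos_of_lt (ENNReal.inv_lt_one.2 ha)).ne'
  refine ⟨2 ^ (p - 1) * (Cr + Cc), by finiteness, fun n b hb => ?_⟩
  have hcol (j : ℕ) : (∑ i ∈ Finset.range j, n i j) ^ p ≤ Cc * ∑' i, (a ^ i) ^ p * n i j ^ p :=
    (ENNReal.rpow_le_rpow (ENNReal.sum_le_tsum _) hp0.le).trans
      (tsum_rpow_le_mul_tsum_pow_mul hp0 ha ha' _)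
  calc ∑' j, b j ^ p
      ≤ ∑' j, 2 ^ (p - 1) * ((∑ i ∈ Finset.range (j + 1), n j i) ^ p +
          (∑ i ∈ Finset.range j, n i j) ^ p) :=
        ENNReal.tsum_le_tsum fun j => (ENNReal.rpow_le_rpow (hb j) hp0.le).trans
          (ENNReal.rpow_add_le_mul_rpow_add_rpow _ _ hp)
    _ ≤ ∑' j, 2 ^ (p - 1) * (Cr * ((a ^ j) ^ p * ∑' i, n j i ^ p) +
          Cc * ∑' i, (a ^ i) ^ p * n i j ^ p) := by
        gcongr with j
        exacts [hrow j _, hcol j]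
    _ = 2 ^ (p - 1) * (Cr + Cc) * ∑' j, (a ^ j) ^ p * ∑' i, n j i ^ p := by
        rw [ENNReal.tsum_mul_left, ENNReal.tsum_add, ENNReal.tsum_mul_left, ENNReal.tsum_mul_left,
          ENNReal.tsum_comm (f := fun j i => (a ^ i) ^ p * n i j ^ p)]
        simp only [ENNReal.tsum_mul_left]
        ring

lemma exists_tsum_rpow_one_div_le_of_le_row_add_column (hp : 1 ≤ p) (ha : 1 < a)
    (ha' : a ≠ ∞) :
    ∃ C : ℝ, 0 < C ∧ ∀ (n : ℕ → ℕ → ℝ≥0∞) (b : ℕ → ℝ≥0∞),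
      (∀ j, b j ≤ (∑ i ∈ Finset.range (j + 1), n j i) + ∑ i ∈ Finset.range j, n i j) →
        (∑' j, b j ^ p) ^ (1 / p) ≤
          ENNReal.ofReal C * (∑' j, (a ^ j) ^ p * ∑' i, n j i ^ p) ^ (1 / p) := by
  obtain ⟨D, hD, hDb⟩ := tsum_rpow_le_of_le_row_add_column hp ha ha'
  have hp' : 0 ≤ 1 / p := by positivity
  refine ⟨D.toReal ^ (1 / p) + 1, by positivity, fun n b hb => ?_⟩
  calc (∑' j, b j ^ p) ^ (1 / p)
      ≤ D ^ (1 / p) * (∑' j, (a ^ j) ^ p * ∑' i, n j i ^ p) ^ (1 / p) := by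
        rw [← ENNReal.mul_rpow_of_nonneg _ _ hp']
        exact ENNReal.rpow_le_rpow (hDb n b hb) hp'
    _ ≤ _ := by
        gcongr
        rw [← ENNReal.ofReal_toReal hD, ENNReal.ofReal_rpow_of_nonneg ENNReal.toReal_nonneg hp',
          ENNReal.toReal_ofReal ENNReal.toReal_nonneg]
        exact ENNReal.ofReal_le_ofReal (by linarith)

end WeightedSequences

lemma ofReal_rpow_natCast_mul_mul {b : ℝ} (hb : 0 < b) (j : ℕ) (θ p : ℝ) :
    ENNReal.ofReal (b ^ ((j : ℝ) * θ * p)) = (ENNReal.ofReal (b ^ θ) ^ j) ^ p := by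
  rw [← ENNReal.ofReal_pow (by positivity), ENNReal.ofReal_rpow_of_pos (by positivity),
    ← Real.rpow_natCast, ← Real.rpow_mul hb.le, ← Real.rpow_mul hb.le, mul_comm θ]

lemma hasCompactSupport_of_tsupport_subset_ball {E F : Type*} [PseudoMetricSpace E]
    [ProperSpace E] [Zero F] {f : E → F} {x : E} {r : ℝ} (h : tsupport f ⊆ Metric.ball x r) :
    HasCompactSupport f :=
  (isCompact_closedBall x r).of_isClosed_subset (isClosed_tsupport f)
    (h.trans Metric.ball_subset_closedBall)

-- `volume` on a product is `volume.prod volume` only up to unfolding, which instance search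
-- does not do.
instance (k : ℕ) : (volume : Measure (ℝ × En k)).IsAddHaarMeasure :=
  inferInstanceAs (volume.prod volume).IsAddHaarMeasure

theorem statement_14_general (k : ℕ) (p θ : ℝ) (hp : 1 < p) (hθ : 0 < θ)
    (φ0 : ℝ → ℝ) (hsm1 : ContDiff ℝ (⊤ : ℕ∞) φ0)
    (hsupp1 : tsupport φ0 ⊆ Metric.ball 0 2)
    (ψ0 : En k → ℝ) (hsm2 : ContDiff ℝ (⊤ : ℕ∞) ψ0)
    (hsupp2 : tsupport ψ0 ⊆ Metric.ball 0 2) :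
    ∃ C : ℝ, 0 < C ∧ ∀ u : SchwartzMap (ℝ × En k) ℂ,
      besovProd k φ0 ψ0 p (⇑u)
        ≤ ENNReal.ofReal C *
          (∑' j : ℕ, ENNReal.ofReal ((2 : ℝ) ^ ((j : ℝ) * θ * p)) *
              ∑' i : ℕ,
                eLpNorm (blockJK k φ0 ψ0 j i (⇑u)) (ENNReal.ofReal p) volume ^ p) ^ (1 / p) := by
  have hφ : Integrable φ0 :=
    hsm1.continuous.integrable_of_hasCompactSupport
      (hasCompactSupport_of_tsupport_subset_ball hsupp1)
  have hψ : Integrable ψ0 :=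
    hsm2.continuous.integrable_of_hasCompactSupport
      (hasCompactSupport_of_tsupport_subset_ball hsupp2)
  obtain ⟨C, hC, hCb⟩ := exists_tsum_rpow_one_div_le_of_le_row_add_column hp.le
    (ENNReal.one_lt_ofReal.2 (Real.one_lt_rpow one_lt_two hθ)) ENNReal.ofReal_ne_top
  refine ⟨C, hC, fun u => ?_⟩
  simp only [ofReal_rpow_natCast_mul_mul two_pos]
  exact hCb _ _ (eLpNorm_blockProd_le hsm1.continuous.measurable hφ hsm2.continuous.measurable hψ
    (ENNReal.one_le_ofReal.2 hp.le) u.integrable)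

theorem statement_14 (k : ℕ) (p θ : ℝ) (hp : 1 < p) (hθ : 0 < θ) (hθ1 : θ < 1)
    (φ0 : ℝ → ℝ) (hsm1 : ContDiff ℝ (⊤ : ℕ∞) φ0)
    (hsupp1 : tsupport φ0 ⊆ Metric.ball 0 2)
    (hrange1 : ∀ ξ, 0 ≤ φ0 ξ ∧ φ0 ξ ≤ 1)
    (hone1 : Metric.closedBall (0 : ℝ) 1 ⊆ interior {ξ : ℝ | φ0 ξ = 1})
    (ψ0 : En k → ℝ) (hsm2 : ContDiff ℝ (⊤ : ℕ∞) ψ0)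
    (hsupp2 : tsupport ψ0 ⊆ Metric.ball 0 2)
    (hrange2 : ∀ ξ, 0 ≤ ψ0 ξ ∧ ψ0 ξ ≤ 1)
    (hone2 : Metric.closedBall (0 : En k) 1 ⊆ interior {ξ : En k | ψ0 ξ = 1}) :
    ∃ C : ℝ, 0 < C ∧ ∀ u : SchwartzMap (ℝ × En k) ℂ,
      besovProd k φ0 ψ0 p (⇑u)
        ≤ ENNReal.ofReal C *
          (∑' j : ℕ, ENNReal.ofReal ((2 : ℝ) ^ ((j : ℝ) * θ * p)) *
              ∑' i : ℕ,
                eLpNorm (blockJK k φ0 ψ0 j i (⇑u)) (ENNReal.ofReal p) volume ^ p) ^ (1 / p) :=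
  statement_14_general k p θ hp hθ φ0 hsm1 hsupp1 ψ0 hsm2 hsupp2

end
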